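/- Let (E, sim, ser, inl) be a g-comtrace alphabet. For every step sequence v there exists a step sequence u in GMC-form with u ≡ v. -/

import Mathlib

variable {E : Type*}

/-- A step over a comtrace alphabet `(E, sim, ser)`: a nonempty finite set of events,
pairwise related by `sim`. -/
def IsStep [DecidableEq E] (sim : E → E → Prop) (A : Finset E) : Prop :=
  A.Nonempty ∧ ∀ a ∈ A, ∀ b ∈ A, a ≠ b → sim a b

/-- A step sequence: a finite list of steps. -/
def IsStepSeq [DecidableEq E] (sim : E → E → Prop) (u : List (Finset E)) : Prop :=
  ∀ A ∈ u, IsStep sim A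

/-- The generating relation of comtrace congruence:
`w·A·z ≈ w·B·C·z` whenever `A`, `B`, `C` are steps with `B ∪ C = A` and `B × C ⊆ ser`. -/
def CTBase [DecidableEq E] (sim ser : E → E → Prop) (u v : List (Finset E)) : Prop :=
  ∃ (w z : List (Finset E)) (A B C : Finset E),
    IsStepSeq sim w ∧ IsStepSeq sim z ∧
    IsStep sim A ∧ IsStep sim B ∧ IsStep sim C ∧
    B ∪ C = A ∧ (∀ b ∈ B, ∀ c ∈ C, ser b c) ∧
    u = w ++ A :: z ∧ v = w ++ B :: C :: z

/-- The least equivalence relation containing `base`. -/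
def LeastEquiv {α : Type*} (base : α → α → Prop) (x y : α) : Prop :=
  ∀ c : α → α → Prop, Equivalence c → (∀ a b, base a b → c a b) → c x y

/-- Comtrace congruence: the least equivalence relation containing `CTBase`. -/
def CTEquiv [DecidableEq E] (sim ser : E → E → Prop) :
    List (Finset E) → List (Finset E) → Prop :=
  LeastEquiv (CTBase sim ser)

/-- The generating relation of g-comtrace congruence: the comtrace rule together with
the interleaving swap `w·A·B·z ≈ w·B·A·z` whenever `A × B ⊆ inl`. -/
def GCTBase [DecidableEq E] (sim ser inl : E → E → Prop)
    (u v : List (Finset E)) : Prop :=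
  CTBase sim ser u v ∨
  ∃ (w z : List (Finset E)) (A B : Finset E),
    IsStepSeq sim w ∧ IsStepSeq sim z ∧ IsStep sim A ∧ IsStep sim B ∧
    (∀ a ∈ A, ∀ b ∈ B, inl a b) ∧
    u = w ++ A :: B :: z ∧ v = w ++ B :: A :: z

/-- g-Comtrace congruence: the least equivalence relation containing `GCTBase`. -/
def GCTEquiv [DecidableEq E] (sim ser inl : E → E → Prop) :
    List (Finset E) → List (Finset E) → Prop :=
  LeastEquiv (GCTBase sim ser inl)

/-- Greedy maximally concurrent form over a g-comtrace alphabet. -/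
def GMCForm [DecidableEq E] (sim ser inl : E → E → Prop)
    (u : List (Finset E)) : Prop :=
  ∀ i : Fin u.length, ∀ (B : Finset E) (y : List (Finset E)),
    IsStep sim B → IsStepSeq sim y →
    GCTEquiv sim ser inl (B :: y) (u.drop (i : ℕ)) → B.card ≤ (u.get i).card

/-! The number of event occurrences is invariant under `≡`: since `ser ⊆ sim` is irreflexive,
a step is only ever split into disjoint parts. Hence the first steps of
the sequences congruent to `v` have bounded size, and we may pick a largest one `B`, with
`B·y ≡ v`. Since `B` is nonempty, `y` has fewer occurrences than `v`, so by induction `y` is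
congruent to some `u` in GMC-form, and `B·u` is then in GMC-form and congruent to `v`. -/

namespace LeastEquiv

variable {α β : Type*}

theorem equivalence (base : α → α → Prop) : Equivalence (LeastEquiv base) where
  refl _ _ hc _ := hc.refl _
  symm h c hc hb := hc.symm (h c hc hb)
  trans h₁ h₂ c hc hb := hc.trans (h₁ c hc hb) (h₂ c hc hb)

theorem of_base {base : α → α → Prop} {x y : α} (h : base x y) : LeastEquiv base x y :=
  fun _ _ hb => hb x y h

theorem map {base : α → α → Prop} {base' : β → β → Prop} (f : α → β)
    (hf : ∀ a b, base a b → LeastEquiv base' (f a) (f b)) {x y : α}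
    (h : LeastEquiv base x y) : LeastEquiv base' (f x) (f y) := fun c hc hb =>
  h (fun a b => c (f a) (f b)) ⟨fun _ => hc.refl _, hc.symm, hc.trans⟩
    fun a b hab => hf a b hab c hc hb

theorem eq_of_base {base : α → α → Prop} (g : α → β) (hg : ∀ a b, base a b → g a = g b)
    {x y : α} (h : LeastEquiv base x y) : g x = g y :=
  h (fun a b => g a = g b) ⟨fun _ => rfl, Eq.symm, Eq.trans⟩ hg

end LeastEquiv

def eventCount (u : List (Finset E)) : ℕ := (u.map Finset.card).sum

@[simp]
theorem eventCount_cons (A : Finset E) (u : List (Finset E)) :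
    eventCount (A :: u) = A.card + eventCount u := by
  simp [eventCount]

@[simp]
theorem eventCount_append (u w : List (Finset E)) :
    eventCount (u ++ w) = eventCount u + eventCount w := by
  simp [eventCount]

section

variable [DecidableEq E] {sim ser inl : E → E → Prop}

theorem IsStepSeq.cons {A : Finset E} {u : List (Finset E)} (hA : IsStep sim A)
    (hu : IsStepSeq sim u) : IsStepSeq sim (A :: u) := by
  simpa [IsStepSeq] using ⟨hA, hu⟩

theorem GCTBase.cons {D : Finset E} (hD : IsStep sim D) {u v : List (Finset E)}
    (h : GCTBase sim ser inl u v) : GCTBase sim ser inl (D :: u) (D :: v) := by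
  rcases h with ⟨w, z, A, B, C, hw, hz, hA, hB, hC, hBC, hser, rfl, rfl⟩ |
    ⟨w, z, A, B, hw, hz, hA, hB, hinl, rfl, rfl⟩
  · exact Or.inl ⟨D :: w, z, A, B, C, hw.cons hD, hz, hA, hB, hC, hBC, hser, rfl, rfl⟩
  · exact Or.inr ⟨D :: w, z, A, B, hw.cons hD, hz, hA, hB, hinl, rfl, rfl⟩

theorem GCTBase.eventCount_eq (hser_irr : ∀ a, ¬ ser a a) {u v : List (Finset E)}
    (h : GCTBase sim ser inl u v) : eventCount u = eventCount v := by
  rcases h with ⟨w, z, A, B, C, -, -, -, -, -, hBC, hser, rfl, rfl⟩ |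
    ⟨w, z, A, B, -, -, -, -, -, rfl, rfl⟩
  · have hdisj : Disjoint B C :=
      Finset.disjoint_left.mpr fun x hxB hxC => hser_irr x (hser x hxB x hxC)
    simp only [eventCount_append, eventCount_cons, ← hBC, Finset.card_union_of_disjoint hdisj]
    omega
  · simp only [eventCount_append, eventCount_cons]
    omega

namespace GCTEquiv

theorem equivalence : Equivalence (GCTEquiv sim ser inl) :=
  LeastEquiv.equivalence _

theorem cons {D : Finset E} (hD : IsStep sim D) {u v : List (Finset E)}
    (h : GCTEquiv sim ser inl u v) : GCTEquiv sim ser inl (D :: u) (D :: v) :=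
  LeastEquiv.map (List.cons D) (fun _ _ hab => LeastEquiv.of_base (hab.cons hD)) h

theorem eventCount_eq (hser_irr : ∀ a, ¬ ser a a) {u v : List (Finset E)}
    (h : GCTEquiv sim ser inl u v) : eventCount u = eventCount v :=
  LeastEquiv.eq_of_base eventCount (fun _ _ => GCTBase.eventCount_eq hser_irr) h

end GCTEquiv

def IsMaxFirstStep (sim ser inl : E → E → Prop) (B : Finset E) (v : List (Finset E)) : Prop :=
  ∀ (C : Finset E) (y : List (Finset E)), IsStep sim C → IsStepSeq sim y →
    GCTEquiv sim ser inl (C :: y) v → C.card ≤ B.card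

theorem IsMaxFirstStep.of_gctEquiv {B : Finset E} {v w : List (Finset E)}
    (hB : IsMaxFirstStep sim ser inl B v) (hvw : GCTEquiv sim ser inl w v) :
    IsMaxFirstStep sim ser inl B w := fun C y hC hy h =>
  hB C y hC hy (GCTEquiv.equivalence.trans h hvw)

theorem exists_isMaxFirstStep (hser_irr : ∀ a, ¬ ser a a) {A : Finset E}
    {v : List (Finset E)} (hv : IsStepSeq sim (A :: v)) :
    ∃ (B : Finset E) (y : List (Finset E)), IsStep sim B ∧ IsStepSeq sim y ∧
      GCTEquiv sim ser inl (B :: y) (A :: v) ∧ IsMaxFirstStep sim ser inl B (A :: v) := by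
  classical
  let IsFirstStepCard (m : ℕ) : Prop := ∃ (B : Finset E) (y : List (Finset E)),
    IsStep sim B ∧ IsStepSeq sim y ∧ GCTEquiv sim ser inl (B :: y) (A :: v) ∧ B.card = m
  have hbound : ∀ m, IsFirstStepCard m → m ≤ eventCount (A :: v) := by
    rintro m ⟨B, y, -, -, h, rfl⟩
    rw [← GCTEquiv.eventCount_eq hser_irr h, eventCount_cons]
    exact Nat.le_add_right _ _
  have hA : IsFirstStepCard A.card :=
    ⟨A, v, hv A List.mem_cons_self, fun X hX => hv X (List.mem_cons_of_mem _ hX),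
      GCTEquiv.equivalence.refl _, rfl⟩
  obtain ⟨B, y, hB, hy, hBy, hcard⟩ := Nat.findGreatest_spec (hbound _ hA) hA
  refine ⟨B, y, hB, hy, hBy, fun C y' hC hy' h => ?_⟩
  have hC : IsFirstStepCard C.card := ⟨C, y', hC, hy', h, rfl⟩
  exact hcard ▸ Nat.le_findGreatest (hbound _ hC) hC

theorem GMCForm.nil : GMCForm sim ser inl [] := fun i => nomatch i

theorem GMCForm.cons {B : Finset E} {u : List (Finset E)}
    (hB : IsMaxFirstStep sim ser inl B (B :: u)) (hu : GMCForm sim ser inl u) :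
    GMCForm sim ser inl (B :: u) := by
  rintro ⟨_ | i, hi⟩ C y hC hy h
  · exact hB C y hC hy h
  · exact hu ⟨i, Nat.succ_lt_succ_iff.mp hi⟩ C y hC hy h

end

theorem stmt11_general [DecidableEq E] (sim ser inl : E → E → Prop)
    (hsim_irr : ∀ a, ¬ sim a a)
    (hser_sub : ∀ a b, ser a b → sim a b)
    (v : List (Finset E)) (hv : IsStepSeq sim v) :
    ∃ u : List (Finset E),
      IsStepSeq sim u ∧ GMCForm sim ser inl u ∧ GCTEquiv sim ser inl u v := by
  have hser_irr : ∀ a, ¬ ser a a := fun a h => hsim_irr a (hser_sub a a h)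
  induction hn : eventCount v using Nat.strong_induction_on generalizing v with
  | _ n ih =>
  cases v with
  | nil => exact ⟨[], hv, GMCForm.nil, GCTEquiv.equivalence.refl _⟩
  | cons A v =>
    obtain ⟨B, y, hB, hy, hBy, hmax⟩ := exists_isMaxFirstStep hser_irr hv
    have hcount : B.card + eventCount y = n := by
      rw [← eventCount_cons, GCTEquiv.eventCount_eq hser_irr hBy, hn]
    have hlt : eventCount y < n := by
      have := Finset.card_pos.mpr hB.1
      omega
    obtain ⟨u, hu, hgmc, huy⟩ := ih _ hlt y hy rfl
    have hBu : GCTEquiv sim ser inl (B :: u) (A :: v) :=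
      GCTEquiv.equivalence.trans (huy.cons hB) hBy
    exact ⟨B :: u, hu.cons hB, hgmc.cons (hmax.of_gctEquiv hBu), hBu⟩

/-- Every step sequence over a g-comtrace alphabet is congruent to a step sequence in
GMC-form. -/
theorem stmt11 [DecidableEq E] [Fintype E] (sim ser inl : E → E → Prop)
    (hsim_irr : ∀ a, ¬ sim a a) (hsim_symm : ∀ a b, sim a b → sim b a)
    (hinl_irr : ∀ a, ¬ inl a a) (hinl_symm : ∀ a b, inl a b → inl b a)
    (hser_sub : ∀ a b, ser a b → sim a b)
    (hdisj : ∀ a b, ¬ (sim a b ∧ inl a b))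
    (v : List (Finset E)) (hv : IsStepSeq sim v) :
    ∃ u : List (Finset E),
      IsStepSeq sim u ∧ GMCForm sim ser inl u ∧ GCTEquiv sim ser inl u v :=
  stmt11_general sim ser inl hsim_irr hser_sub v hv
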